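/- arXiv:math/0204117 — 3 statements merged into one kernel-verified Lean document; each statement's English description precedes it below -/
import Mathlib

section
/- Let μ be a σ-finite measure on X and let E be a complex Hilbert space. Suppose S : L²(X, μ; E) → L²(X, μ; E) is a norm-preserving, additive, conjugate-homogeneous involution (S² = id) such that for every measurable set A ⊆ X and every f, S(χ_A·f) = χ_{1−A}·(Sf). Then for every f ∈ L²(X, μ; E), the essential support of Sf is the complement-flip of that of f: the sets {x ∈ X : (Sf)(x) ≠ 0} and 1 − {x ∈ X : f(x) ≠ 0} differ by a μ-null set (for any choice of measurable representatives). -/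
/-!
Common setup: `GWX` is the compact abelian group `X = ∏_{k ≥ 1} {0,1}` of 0-1 sequences
(with componentwise addition mod 2 and the product σ-algebra, which is generated by the
sets `X_k = {x : x_k = 1}`).  The coordinate `i : ℕ` of `x : GWX` represents the paper's
coordinate `x_{i+1}`, so the Lean index `k : ℕ` corresponds to the paper's index `k + 1`
throughout; in particular the paper's sign `(-1)^k` becomes `(-1)^(k+1)` here.
-/

open MeasureTheory Complex Filter
open scoped ENNReal

noncomputable section

abbrev GWX : Type := ℕ → ZMod 2

/-- `δ_k`: the sequence with `1` in the `k`-th place (the paper's `(k+1)`-th place)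
and `0` elsewhere. -/
def gwDelta (k : ℕ) : GWX := fun i => if i = k then 1 else 0

/-- The componentwise complement `x ↦ 1 - x`. -/
def gwFlip (x : GWX) : GWX := fun i => 1 - x i

/-- The sign `(-1)^{x_1 + ⋯ + x_{k-1} + 1}` of the paper, for the paper's index `k + 1`. -/
def gwSign (k : ℕ) (x : GWX) : ℂ := (-1 : ℂ) ^ ((∑ i ∈ Finset.range k, (x i).val) + 1)

open scoped symmDiff

/-!
Applied to `f = χ_{supp f} f`, the intertwining relation gives `supp (S f) ⊆ 1 - supp f` a.e.;
applied to `S f`, together with `S² = id`, it gives `supp f ⊆ 1 - supp (S f)` a.e. Flipping the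
second inclusion needs `x ↦ 1 - x` to preserve `μ`-null sets. For a null set `N`, the relation
with `A = N` reads `0 = S 0 = χ_{1-N} f` for every `f`, so every `L²` function vanishes on
`1 - N`, which by σ-finiteness forces `μ (1 - N) = 0`.
-/

open Function

section

variable {α E : Type*} [MeasurableSpace α] [NormedAddCommGroup E] {p : ℝ≥0∞} {μ : Measure α}

theorem measure_eq_zero_of_forall_Lp_eq_zero_on [SigmaFinite μ] [Nontrivial E] {s : Set α}
    (h : ∀ f : Lp E p μ, ∀ᵐ x ∂μ, x ∈ s → f x = 0) : μ s = 0 := by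
  obtain ⟨e, he⟩ := exists_ne (0 : E)
  suffices ∀ᵐ x ∂μ, x ∉ s from measure_eq_zero_iff_ae_notMem.mpr this
  refine ae_of_forall_measure_lt_top_ae_restrict _ fun t ht htμ => ?_
  have hind := indicatorConstLp_coeFn (p := p) (hs := ht) (hμs := htμ.ne) (c := e)
  rw [ae_restrict_iff' ht]
  filter_upwards [h (indicatorConstLp p ht htμ.ne e), hind] with x hzero hx hxt hxs
  rw [hzero hxs, Set.indicator_of_mem hxt] at hx
  exact he hx.symm

variable (p μ) in
def IndicatorIntertwining (τ : α → α) (S : Lp E p μ → Lp E p μ) : Prop :=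
  ∀ A, MeasurableSet A → ∀ f g : Lp E p μ, (g : α → E) =ᵐ[μ] A.indicator f →
    (S g : α → E) =ᵐ[μ] (τ '' A).indicator (S f)

namespace IndicatorIntertwining

variable {τ : α → α} {S : Lp E p μ → Lp E p μ}

theorem map_zero (hS : IndicatorIntertwining p μ τ S) : S 0 = 0 := by
  have h := hS ∅ MeasurableSet.empty 0 0
    ((Lp.coeFn_zero E p μ).trans (Set.indicator_empty _).symm.eventuallyEq)
  rw [Set.image_empty, Set.indicator_empty] at h
  exact Lp.eq_zero_iff_ae_eq_zero.mpr h

theorem support_ae_le (hS : IndicatorIntertwining p μ τ S) (f : Lp E p μ) :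
    support (S f) ≤ᵐ[μ] τ '' support f := by
  have h := hS _ (Lp.stronglyMeasurable f).measurableSet_support f f
    (by rw [Set.indicator_support])
  filter_upwards [h] with x hx hxS
  exact (Set.mem_of_indicator_ne_zero (hx ▸ mem_support.mp hxS) : x ∈ τ '' support f)

theorem quasiMeasurePreserving [SigmaFinite μ] [Nontrivial E] (hS : IndicatorIntertwining p μ τ S)
    (hSinv : Involutive S) (hτ : Measurable τ) (hτinv : Involutive τ) :
    Measure.QuasiMeasurePreserving τ μ μ := by
  refine ⟨hτ, Measure.AbsolutelyContinuous.mk fun N hN hN0 => ?_⟩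
  rw [Measure.map_apply hτ hN, ← congrFun hτinv.image_eq_preimage_symm N]
  refine measure_eq_zero_of_forall_Lp_eq_zero_on (E := E) (p := p) fun f => ?_
  have hzero : ((0 : Lp E p μ) : α → E) =ᵐ[μ] N.indicator (S f) := by
    refine (Lp.coeFn_zero E p μ).trans ?_
    filter_upwards [measure_eq_zero_iff_ae_notMem.mp hN0] with x hx
    rw [Set.indicator_of_notMem hx, Pi.zero_apply]
  have h := hS N hN (S f) 0 hzero
  rw [hS.map_zero, hSinv f] at h
  filter_upwards [h, Lp.coeFn_zero E p μ] with x hx hx0 hxN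
  rw [← Set.indicator_of_mem hxN f, ← hx, hx0, Pi.zero_apply]

theorem support_ae_eq [SigmaFinite μ] (hS : IndicatorIntertwining p μ τ S) (hSinv : Involutive S)
    (hτ : Measurable τ) (hτinv : Involutive τ) {f : Lp E p μ} {u v : α → E}
    (hu : u =ᵐ[μ] f) (hv : v =ᵐ[μ] S f) : support v =ᵐ[μ] τ '' support u := by
  rcases subsingleton_or_nontrivial E with hE | hE
  · simp [Subsingleton.elim u 0, Subsingleton.elim v 0]
  have hτμ := hS.quasiMeasurePreserving hSinv hτ hτinv
  have himage := congrFun hτinv.image_eq_preimage_symm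
  have hflip : τ '' support f ≤ᵐ[μ] support (S f) := by
    have h := hτμ.preimage_mono_ae (hS.support_ae_le (S f))
    rw [hSinv f, himage, ← Set.preimage_comp, hτinv.comp_self, Set.preimage_id] at h
    rwa [himage]
  refine hv.support.trans (((hS.support_ae_le f).antisymm hflip).trans ?_)
  rw [himage, himage]
  exact hτμ.preimage_ae_eq hu.support.symm

end IndicatorIntertwining

end

theorem gwFlip_involutive : Involutive gwFlip := fun x => funext fun i => sub_sub_cancel 1 (x i)

theorem measurable_gwFlip : Measurable gwFlip :=
  measurable_pi_lambda _ fun i => (measurable_of_countable _).comp (measurable_pi_apply i)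

theorem conj_involution_support_flip_general
    {E : Type*} [NormedAddCommGroup E]
    (μ : Measure GWX) [SigmaFinite μ]
    (S : Lp E 2 μ → Lp E 2 μ)
    (hinv : ∀ f, S (S f) = f)
    (hA : ∀ (A : Set GWX), MeasurableSet A → ∀ (f g : Lp E 2 μ),
      (↑g : GWX → E) =ᵐ[μ] A.indicator ↑f →
      (↑(S g) : GWX → E) =ᵐ[μ] (gwFlip '' A).indicator ↑(S f)) :
    ∀ (f : Lp E 2 μ) (u v : GWX → E),
      u =ᵐ[μ] (↑f : GWX → E) → v =ᵐ[μ] (↑(S f) : GWX → E) →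
      μ ({x : GWX | v x ≠ 0} ∆ (gwFlip '' {x : GWX | u x ≠ 0})) = 0 :=
  fun _ _ _ hu hv => measure_symmDiff_eq_zero_iff.mpr <|
    IndicatorIntertwining.support_ae_eq (τ := gwFlip) hA hinv measurable_gwFlip gwFlip_involutive
      hu hv

/-- if a norm-preserving, additive, conjugate-homogeneous involution `S` of
`L²(X, μ; E)` intertwines multiplication by `χ_A` with multiplication by `χ_{1-A}` for every
measurable `A`, then for every `f` the (essential) support of `S f` is the complement-flip
`1 - Supp f` of the support of `f`: for any choice of representatives `u` of `f` and `v` of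
`S f`, the sets `{v ≠ 0}` and `1 - {u ≠ 0}` differ by a `μ`-null set. -/
theorem conj_involution_support_flip
    {E : Type*} [NormedAddCommGroup E] [InnerProductSpace ℂ E] [CompleteSpace E]
    (μ : Measure GWX) [SigmaFinite μ]
    (S : Lp E 2 μ → Lp E 2 μ)
    (hnorm : ∀ f, ‖S f‖ = ‖f‖)
    (hadd : ∀ f g, S (f + g) = S f + S g)
    (hconj : ∀ (α : ℂ) (f : Lp E 2 μ), S (α • f) = (starRingEnd ℂ) α • S f)
    (hinv : ∀ f, S (S f) = f)
    (hA : ∀ (A : Set GWX), MeasurableSet A → ∀ (f g : Lp E 2 μ),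
      (↑g : GWX → E) =ᵐ[μ] A.indicator ↑f →
      (↑(S g) : GWX → E) =ᵐ[μ] (gwFlip '' A).indicator ↑(S f)) :
    ∀ (f : Lp E 2 μ) (u v : GWX → E),
      u =ᵐ[μ] (↑f : GWX → E) → v =ᵐ[μ] (↑(S f) : GWX → E) →
      μ ({x : GWX | v x ≠ 0} ∆ (gwFlip '' {x : GWX | u x ≠ 0})) = 0 :=
  conj_involution_support_flip_general μ S hinv hA
end
end

section
/- Let Δ be the countable set of finitely supported 0-1 sequences indexed by the positive integers, with componentwise addition modulo 2, and let H = ℓ²(Δ; ℂ). For each k ≥ 1 define operators on H by (J_k f)(x) = (−1)^{x_1+⋯+x_{k−1}+1} · i · f(x+δ_k) and (J'_k f)(x) = (−1)^{x_k} · i · (J_k f)(x), where δ_k is the sequence with 1 in the k-th place and 0 elsewhere. Then the representation is irreducible over ℝ: the only closed real-linear subspaces of ℓ²(Δ; ℂ) invariant under J_k and J'_k for all k ≥ 1 are {0} and ℓ²(Δ; ℂ). -/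
/-!
`GWDelta` is the group `Δ` of finitely supported 0-1 sequences indexed by the positive
integers, with componentwise addition mod 2; the Lean coordinate `i : ℕ` represents the
paper's coordinate `i + 1` (so the Lean index `k` corresponds to the paper's index `k + 1`).
`FockH = ℓ²(Δ; ℂ)`, and `Finsupp.single k 1` is the element `δ_k`.

Proof idea: `J'_k J_k` is multiplication by `(-1)^{x_k + 1} i`, so `U` is stable under
multiplication by the real signs `(-1)^{x_n + x_{n+1}}`. Averaging `f ∈ U` against these signs
cuts `f` down to the set where `x + y` is constant on `[0, n]`; as `n → ∞` these truncations
converge in `ℓ²` to `f(y) e_y`, because a finitely supported sequence that is constant is zero.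
Multiplication by `±i` then yields the whole complex line `ℂ e_y`, the signed translations `J'_k`
carry it to every `ℂ e_z`, and the `e_z` span a dense subspace.
-/

open MeasureTheory Complex

noncomputable section

abbrev GWDelta : Type := ℕ →₀ ZMod 2

abbrev FockH : Type := lp (fun _ : GWDelta => ℂ) 2

open Filter Topology
open scoped ENNReal

theorem ZMod.eq_zero_or_eq_one (c : ZMod 2) : c = 0 ∨ c = 1 := by
  revert c; decide

theorem ZMod.neg_one_pow_val_add {R : Type*} [Ring R] (a b : ZMod 2) :
    (-1 : R) ^ (a + b).val = (-1) ^ a.val * (-1) ^ b.val := by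
  rw [ZMod.val_add, ← neg_one_pow_eq_pow_mod_two, pow_add]

theorem ZMod.inv_two_mul_one_add_neg_one_pow_val (c : ZMod 2) :
    (2⁻¹ : ℂ) * (1 + (-1) ^ c.val) = if c = 0 then 1 else 0 := by
  obtain rfl | rfl := c.eq_zero_or_eq_one <;> norm_num [ZMod.val_one]

theorem Finsupp.eq_zero_of_forall_apply_eq_apply_succ {M : Type*} [Zero M] {d : ℕ →₀ M}
    (h : ∀ i, d i = d (i + 1)) : d = 0 := by
  have hconst : ∀ i, d i = d 0 := fun i => by
    induction i with
    | zero => rfl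
    | succ i ih => rw [← h, ih]
  obtain ⟨i, hi⟩ := Infinite.exists_notMem_finset d.support
  ext j
  rw [hconst j, ← hconst i, Finsupp.notMem_support_iff.1 hi, Finsupp.coe_zero, Pi.zero_apply]

theorem Finsupp.induction_add_single_one {ι : Type*} {P : (ι →₀ ZMod 2) → Prop} (h0 : P 0)
    (hstep : ∀ x i, P x → P (x + Finsupp.single i 1)) (x : ι →₀ ZMod 2) : P x := by
  induction x using Finsupp.induction with
  | zero => exact h0
  | single_add i b x _ hb ih =>
    obtain rfl : b = 1 := b.eq_zero_or_eq_one.resolve_left hb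
    rw [add_comm]
    exact hstep x i ih

theorem Submodule.complex_smul_mem_of_smul_mem {V : Type*} [AddCommGroup V] [Module ℂ V]
    [Module ℝ V] [IsScalarTower ℝ ℂ V] (U : Submodule ℝ V) {z : ℂ} (hz : z.im ≠ 0) {v : V}
    (hv : v ∈ U) (hzv : z • v ∈ U) (u : ℂ) : u • v ∈ U := by
  set b := u.im / z.im
  have hu : u = ((u.re - b * z.re : ℝ) : ℂ) + (b : ℂ) * z := by
    apply Complex.ext <;> simp [b]
    field_simp
  rw [hu, add_smul, mul_smul, ← Complex.coe_algebraMap, algebraMap_smul, algebraMap_smul]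
  exact U.add_mem (U.smul_mem _ hv) (U.smul_mem _ hzv)

namespace lp

variable {α : Type*} [DecidableEq α] {p : ℝ≥0∞}

theorem single_mem_of_mul_mem [Fact (1 ≤ p)] (U : Submodule ℝ (lp (fun _ : α => ℂ) p))
    {T : lp (fun _ : α => ℂ) p → lp (fun _ : α => ℂ) p} {m : α → ℂ}
    (hT : ∀ f a, T f a = m a * f a) (hTU : ∀ f ∈ U, T f ∈ U) {a : α} (hma : (m a).im ≠ 0)
    {c : ℂ} (hc : c ≠ 0) (hca : lp.single p a c ∈ U) (w : ℂ) : lp.single p a w ∈ U := by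
  have hTa : T (lp.single p a c) = m a • lp.single p a c := by
    ext b
    rw [hT, lp.coeFn_smul, Pi.smul_apply, smul_eq_mul]
    rcases eq_or_ne b a with rfl | hba
    · rfl
    · rw [lp.single_apply_ne p a _ hba, mul_zero, mul_zero]
  have := U.complex_smul_mem_of_smul_mem hma hca (hTa ▸ hTU _ hca) (w / c)
  rwa [← lp.single_smul, smul_eq_mul, div_mul_cancel₀ w hc] at this

theorem single_sub_mem_of_shift_mem [AddGroup α] {U : Set (lp (fun _ : α => ℂ) p)}
    {S : lp (fun _ : α => ℂ) p → lp (fun _ : α => ℂ) p} {s : α → ℂ} {a : α}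
    (hS : ∀ f x, S f x = s x * f (x + a)) (hSU : ∀ f ∈ U, S f ∈ U) (hs : ∀ x, s x ≠ 0)
    {z : α} (hz : ∀ w, lp.single p z w ∈ U) (w : ℂ) : lp.single p (z - a) w ∈ U := by
  have hSz : S (lp.single p z (w / s (z - a))) = lp.single p (z - a) w := by
    ext x
    rw [hS]
    rcases eq_or_ne x (z - a) with rfl | hx
    · rw [sub_add_cancel, lp.single_apply_self, lp.single_apply_self, mul_div_cancel₀ _ (hs _)]
    · rw [lp.single_apply_ne p z _ fun h => hx (eq_sub_of_add_eq h), lp.single_apply_ne p _ _ hx,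
        mul_zero]
  exact hSz ▸ hSU _ (hz _)

variable {E : α → Type*} [∀ a, NormedAddCommGroup (E a)] [Fact (1 ≤ p)]

theorem tendsto_of_eventually_eq_of_norm_sub_le (hp : p ≠ ∞) {ι : Type*} {l : Filter ι}
    {g : ι → lp E p} {φ f : lp E p} (hev : ∀ a, ∀ᶠ n in l, g n a = φ a)
    (hle : ∀ n a, ‖g n a - φ a‖ ≤ ‖f a‖) : Tendsto g l (𝓝 φ) := by
  rw [tendsto_iff_norm_sub_tendsto_zero, Metric.tendsto_nhds]
  intro ε hε
  obtain ⟨s, hs⟩ := (Metric.tendsto_nhds.1 (lp.hasSum_single hp f) ε hε).exists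
  set tail := f - ∑ a ∈ s, lp.single p a (f a)
  refine ((eventually_all_finset s).2 fun a _ => hev a).mono fun n hn => ?_
  have hle_tail : ∀ a, ‖(g n - φ) a‖ ≤ ‖tail a‖ := by
    intro a
    by_cases ha : a ∈ s
    · simp [hn a ha]
    · have : tail a = f a := by
        rw [lp.coeFn_sub, lp.coeFn_sum, Pi.sub_apply, Finset.sum_apply, sub_eq_self]
        exact Finset.sum_eq_zero fun b hb => lp.single_apply_ne p b _ fun h => ha (h ▸ hb)
      simpa [this] using hle n a
  rw [Real.dist_0_eq_abs, abs_norm]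
  calc ‖g n - φ‖ ≤ ‖tail‖ := lp.norm_mono (zero_lt_one.trans_le Fact.out).ne' hle_tail
    _ < ε := by rwa [dist_comm, dist_eq_norm] at hs

theorem submodule_eq_top_of_single_mem (hp : p ≠ ∞) {𝕜 : Type*} [NormedRing 𝕜]
    [∀ a, Module 𝕜 (E a)] [∀ a, IsBoundedSMul 𝕜 (E a)]
    (U : Submodule 𝕜 (lp E p)) (hU : IsClosed (U : Set (lp E p)))
    (hsingle : ∀ a (c : E a), lp.single p a c ∈ U) : U = ⊤ :=
  U.eq_top_iff'.2 fun f => hU.mem_of_tendsto (lp.hasSum_single hp f)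
    (Eventually.of_forall fun _ => U.sum_mem fun a _ => hsingle a (f a))

end lp

namespace FermiFock

section Localization

variable (U : Submodule ℝ FockH) {M : ℕ → FockH → FockH}
  (hM : ∀ n f x, M n f x = (-1 : ℂ) ^ (x n + x (n + 1)).val * f x)
  (hMU : ∀ n, ∀ f ∈ U, M n f ∈ U)
include hM hMU

theorem exists_mem_apply_eq_ite {f : FockH} (hf : f ∈ U) (y : GWDelta) (n : ℕ) :
    ∃ g ∈ U, ∀ x, g x = if ∀ i < n, (x + y) i = (x + y) (i + 1) then f x else 0 := by
  induction n with
  | zero => exact ⟨f, hf, fun x => by simp⟩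
  | succ n ih =>
    obtain ⟨g, hgU, hg⟩ := ih
    refine ⟨(2⁻¹ : ℝ) • (g + ((-1 : ℝ) ^ (y n + y (n + 1)).val) • M n g),
      U.smul_mem _ (U.add_mem hgU (U.smul_mem _ (hMU n g hgU))), fun x => ?_⟩
    have hproj : (2⁻¹ : ℂ) * (1 + (-1) ^ (y n + y (n + 1)).val * (-1) ^ (x n + x (n + 1)).val) =
        if (x + y) n = (x + y) (n + 1) then 1 else 0 := by
      have hsum : y n + y (n + 1) + (x n + x (n + 1)) = (x + y) n + (x + y) (n + 1) := by
        simp only [Finsupp.add_apply]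
        ring
      rw [← ZMod.neg_one_pow_val_add, hsum, ZMod.inv_two_mul_one_add_neg_one_pow_val]
      simp only [CharTwo.add_eq_zero]
    calc _ = (2⁻¹ : ℂ) * (1 + (-1) ^ (y n + y (n + 1)).val * (-1) ^ (x n + x (n + 1)).val) *
          g x := by
          simp only [lp.coeFn_smul, lp.coeFn_add, Pi.smul_apply, Pi.add_apply, hM,
            Complex.real_smul]
          push_cast
          ring
      _ = _ := by
          rw [hproj, hg, ite_zero_mul_ite_zero, one_mul]
          exact if_congr (by rw [Nat.forall_lt_succ_right, and_comm]) rfl rfl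

theorem single_apply_self_mem (hU : IsClosed (U : Set FockH)) {f : FockH} (hf : f ∈ U)
    (y : GWDelta) : lp.single 2 y (f y) ∈ U := by
  choose g hgU hg using exists_mem_apply_eq_ite U hM hMU hf y
  refine hU.mem_of_tendsto
    (lp.tendsto_of_eventually_eq_of_norm_sub_le (by simp) (l := atTop) (f := f) ?_ ?_)
    (Eventually.of_forall hgU)
  · intro x
    rcases eq_or_ne x y with rfl | hxy
    · exact Eventually.of_forall fun n => by simp [hg, ZModModule.add_self]
    · obtain ⟨i, hi⟩ : ∃ i, (x + y) i ≠ (x + y) (i + 1) := by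
        by_contra! h
        refine hxy (sub_eq_zero.1 ?_)
        rw [ZModModule.sub_eq_add]
        exact Finsupp.eq_zero_of_forall_apply_eq_apply_succ h
      filter_upwards [eventually_gt_atTop i] with n hn
      rw [hg, if_neg fun h => hi (h i hn), lp.single_apply_ne 2 y _ hxy]
  · intro n x
    rw [hg]
    rcases eq_or_ne x y with rfl | hxy
    · simp [ZModModule.add_self]
    · rw [lp.single_apply_ne 2 y _ hxy, sub_zero]
      split_ifs <;> simp

end Localization

theorem single_mem_of_shift_mem {U : Set FockH} {S : ℕ → FockH → FockH} {s : ℕ → GWDelta → ℂ}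
    (hS : ∀ k f x, S k f x = s k x * f (x + Finsupp.single k 1)) (hSU : ∀ k, ∀ f ∈ U, S k f ∈ U)
    (hs : ∀ k x, s k x ≠ 0) {y : GWDelta} (hy : ∀ w, lp.single 2 y w ∈ U) (z : GWDelta) (w : ℂ) :
    lp.single 2 z w ∈ U := by
  suffices h : ∀ d : GWDelta, ∀ w, lp.single 2 (y + d) w ∈ U by
    simpa [← add_assoc, ZModModule.add_self] using h (y + z) w
  refine Finsupp.induction_add_single_one (by simpa using hy) fun d k hd => ?_
  rw [← add_assoc, ← ZModModule.sub_eq_add]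
  exact lp.single_sub_mem_of_shift_mem (hS k) (hSU k) (hs k) hd

section Operators

variable {J J' : ℕ → FockH → FockH}
  (hJ : ∀ (k : ℕ) (f : FockH) (x : GWDelta),
    J k f x = (-1 : ℂ) ^ ((∑ i ∈ Finset.range k, (x i).val) + 1) * I * f (x + Finsupp.single k 1))
  (hJ' : ∀ (k : ℕ) (f : FockH) (x : GWDelta), J' k f x = (-1 : ℂ) ^ (x k).val * I * J k f x)

include hJ

theorem J_J_apply (k : ℕ) (f : FockH) (x : GWDelta) : J k (J k f) x = -f x := by
  have hsum : ∑ i ∈ Finset.range k, ((x + Finsupp.single k 1 : GWDelta) i).val =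
      ∑ i ∈ Finset.range k, (x i).val :=
    Finset.sum_congr rfl fun i hi => by simp [(Finset.mem_range.1 hi).ne]
  have hsq : ((-1 : ℂ) ^ (∑ i ∈ Finset.range k, (x i).val + 1)) ^ 2 = 1 := by
    rw [← pow_mul, pow_mul', neg_one_sq, one_pow]
  rw [hJ, hJ, hsum, add_assoc, ZModModule.add_self, add_zero]
  linear_combination (I ^ 2 * f x) * hsq + f x * I_sq

include hJ'

theorem J'_J_apply (k : ℕ) (f : FockH) (x : GWDelta) :
    J' k (J k f) x = (-1 : ℂ) ^ ((x k).val + 1) * I * f x := by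
  rw [hJ', J_J_apply hJ, pow_succ]
  ring

theorem J'_apply (k : ℕ) (f : FockH) (x : GWDelta) :
    J' k f x = (-1 : ℂ) ^ ((x k).val + ∑ i ∈ Finset.range k, (x i).val) *
      f (x + Finsupp.single k 1) := by
  rw [hJ', hJ, pow_succ, pow_add]
  linear_combination (-((-1 : ℂ) ^ (x k).val * (-1) ^ (∑ i ∈ Finset.range k, (x i).val) *
    f (x + Finsupp.single k 1))) * I_sq

theorem neg_J'_J_J'_J_apply (n : ℕ) (f : FockH) (x : GWDelta) :
    (-J' n (J n (J' (n + 1) (J (n + 1) f)))) x = (-1 : ℂ) ^ (x n + x (n + 1)).val * f x := by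
  rw [lp.coeFn_neg, Pi.neg_apply, J'_J_apply hJ hJ', J'_J_apply hJ hJ',
    ZMod.neg_one_pow_val_add, pow_succ, pow_succ]
  linear_combination (-((-1 : ℂ) ^ (x n).val * (-1) ^ (x (n + 1)).val * f x)) * I_sq

end Operators

end FermiFock

open FermiFock in
/-- the Fermi–Fock representation, given on `ℓ²(Δ; ℂ)` by
`(J_k f)(x) = (-1)^{x_1+⋯+x_{k-1}+1} i f(x + δ_k)` and `(J'_k f)(x) = (-1)^{x_k} i (J_k f)(x)`,
is irreducible over `ℝ`: it admits no nontrivial closed invariant real subspace. -/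
theorem fermiFock_irreducible_real
    (J J' : ℕ → FockH → FockH)
    (hJ : ∀ (k : ℕ) (f : FockH) (x : GWDelta),
      (J k f : ∀ _ : GWDelta, ℂ) x =
        (-1 : ℂ) ^ ((∑ i ∈ Finset.range k, (x i).val) + 1) * Complex.I *
          (f : ∀ _ : GWDelta, ℂ) (x + Finsupp.single k 1))
    (hJ' : ∀ (k : ℕ) (f : FockH) (x : GWDelta),
      (J' k f : ∀ _ : GWDelta, ℂ) x =
        (-1 : ℂ) ^ (x k).val * Complex.I * (J k f : ∀ _ : GWDelta, ℂ) x) :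
    ∀ U : Submodule ℝ FockH, IsClosed (U : Set FockH) →
      (∀ k : ℕ, ∀ f ∈ U, J k f ∈ U ∧ J' k f ∈ U) →
      U = ⊥ ∨ U = ⊤ := by
  intro U hU hinv
  refine or_iff_not_imp_left.2 fun hbot => ?_
  obtain ⟨f, hfU, hf0⟩ := (Submodule.ne_bot_iff U).1 hbot
  obtain ⟨y, hy⟩ : ∃ y, f y ≠ 0 := by
    by_contra! h
    exact hf0 (lp.ext (funext h))
  have hJ'JU : ∀ k, ∀ g ∈ U, J' k (J k g) ∈ U := fun k g hg => (hinv k _ (hinv k g hg).1).2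
  have hy_mem : lp.single 2 y (f y) ∈ U := single_apply_self_mem U (neg_J'_J_J'_J_apply hJ hJ')
    (fun n g hg => U.neg_mem (hJ'JU n _ (hJ'JU (n + 1) g hg))) hU hfU y
  have hy_line : ∀ w, lp.single 2 y w ∈ U :=
    lp.single_mem_of_mul_mem U (J'_J_apply hJ hJ' 0) (hJ'JU 0)
      (by rcases neg_one_pow_eq_or ℂ ((y 0).val + 1) with h | h <;> simp [h]) hy hy_mem
  exact lp.submodule_eq_top_of_single_mem (by simp) U hU
    (single_mem_of_shift_mem (J'_apply hJ hJ') (fun k g hg => (hinv k g hg).2) (by simp) hy_line)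
end
end

section
/- Let c_k : X → ℂ be defined by c_k ≡ 1 for k even, c_{4ℓ+1}(x) = (−1)^{x_{4ℓ+3}} and c_{4ℓ+3}(x) = (−1)^{x_{4ℓ+1}} for ℓ ≥ 0, and define operators on L²(X, μ_X; ℂ) by (J_k f)(x) = (−1)^{x_1+⋯+x_{k−1}+1} · i · c_k(x) · f(x+δ_k) and (J'_k f)(x) = (−1)^{x_k} · i · (J_k f)(x) (well defined since translation by δ_k preserves μ_X). Then each J_k and each J'_k is a surjective ℂ-linear isometry of L²(X, μ_X; ℂ), J_k² = −id = J'_k² for every k, and the operators pairwise anticommute: J_k J_l = −J_l J_k and J'_k J'_l = −J'_l J'_k for all k ≠ l, and J_k J'_l = −J'_l J_k for all k, l ≥ 1. -/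
/-!
Common setup: `GWX` is the compact abelian group `X = ∏_{k ≥ 1} {0,1}` of 0-1 sequences
(with componentwise addition mod 2 and the product σ-algebra, which is generated by the
sets `X_k = {x : x_k = 1}`).  The coordinate `i : ℕ` of `x : GWX` represents the paper's
coordinate `x_{i+1}`, so the Lean index `k : ℕ` corresponds to the paper's index `k + 1`
throughout; in particular the paper's sign `(-1)^k` becomes `(-1)^(k+1)` here.
-/

open MeasureTheory Complex Filter
open scoped ENNReal

noncomputable section

/-- The functions `c_k` of Theorem 3.11: in the paper's (1-based) indexing, `c_k ≡ 1` for
`k` even, `c_{4ℓ+1}(x) = (-1)^{x_{4ℓ+3}}`, `c_{4ℓ+3}(x) = (-1)^{x_{4ℓ+1}}`.  In the Lean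
(0-based) indexing used here (`Lean k` = paper's `k+1`): `gwC k ≡ 1` for `k` odd,
`gwC k x = (-1)^{x (k+2)}` for `k ≡ 0 [MOD 4]`, and `gwC k x = (-1)^{x (k-2)}` for
`k ≡ 2 [MOD 4]`. -/
def gwC (k : ℕ) (x : GWX) : ℂ :=
  if k % 2 = 1 then 1
  else if k % 4 = 0 then (-1 : ℂ) ^ (x (k + 2)).val
  else (-1 : ℂ) ^ (x (k - 2)).val

/- ### auxiliary sign algebra -/

lemma gw_t_add (a b : ZMod 2) : (-1:ℂ)^((a+b).val) = (-1)^a.val * (-1)^b.val := by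
  rw [ZMod.val_add, ← neg_one_pow_eq_pow_mod_two, pow_add]

lemma gw_t_sq (n : ℕ) : (-1:ℂ)^n * (-1)^n = 1 := by
  rw [← mul_pow]; norm_num

lemma gwDelta_val (l i : ℕ) : (-1:ℂ)^((gwDelta l i).val) = if i = l then -1 else 1 := by
  unfold gwDelta; split <;> simp [ZMod.val_one]

lemma gw_t_shift (m l : ℕ) (x : GWX) :
    (-1:ℂ)^(((x + gwDelta l) m).val) = (if m = l then -1 else 1) * (-1)^((x m).val) := by
  rw [Pi.add_apply, gw_t_add, gwDelta_val, mul_comm]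

lemma gwSign_add_delta (k l : ℕ) (x : GWX) :
    gwSign k (x + gwDelta l) = (if l < k then -1 else 1) * gwSign k x := by
  unfold gwSign
  rw [pow_add, pow_add, ← Finset.prod_pow_eq_pow_sum, ← Finset.prod_pow_eq_pow_sum]
  simp only [Pi.add_apply, gw_t_add, gwDelta_val, Finset.prod_mul_distrib]
  rw [Finset.prod_ite_eq' (Finset.range k) l (fun _ => (-1:ℂ))]
  simp only [Finset.mem_range]
  split <;> ring

lemma gwSign_sq (k : ℕ) (x : GWX) : gwSign k x ^ 2 = 1 := by
  unfold gwSign; rw [← pow_mul, mul_comm, pow_mul]; norm_num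

def gwCond (k l : ℕ) : Prop := k % 2 ≠ 1 ∧ (if k % 4 = 0 then k + 2 else k - 2) = l

instance : ∀ k l, Decidable (gwCond k l) := fun k l => by unfold gwCond; infer_instance

lemma gwCond_symm (k l : ℕ) : gwCond k l ↔ gwCond l k := by
  unfold gwCond
  by_cases h1 : k % 4 = 0 <;> by_cases h2 : l % 4 = 0 <;> simp [h1, h2] <;> omega

lemma gwCond_irrefl (k : ℕ) : ¬ gwCond k k := by
  unfold gwCond; split <;> omega

lemma gwC_add_delta (k l : ℕ) (x : GWX) :
    gwC k (x + gwDelta l) = (if gwCond k l then -1 else 1) * gwC k x := by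
  unfold gwC gwCond
  by_cases h1 : k % 2 = 1 <;> by_cases h2 : k % 4 = 0 <;>
    simp only [h1, h2, if_true, if_false, gw_t_shift] <;> simp [h1, h2]

lemma gwC_sq (k : ℕ) (x : GWX) : gwC k x ^ 2 = 1 := by
  unfold gwC; split_ifs <;> simp [sq, gw_t_sq]

/- ### the unit kernels -/

def gwU (k : ℕ) (x : GWX) : ℂ := gwSign k x * Complex.I * gwC k x

def gwW (k : ℕ) (x : GWX) : ℂ := (-1:ℂ)^((x k).val) * Complex.I * gwU k x

lemma gwU_norm (k : ℕ) (x : GWX) : ‖gwU k x‖ = 1 := by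
  unfold gwU gwSign gwC
  split_ifs <;> simp [norm_mul]

lemma gwW_norm (k : ℕ) (x : GWX) : ‖gwW k x‖ = 1 := by
  rw [gwW, norm_mul, norm_mul, gwU_norm]; simp

lemma gwU_sq (k : ℕ) (x : GWX) : gwU k x * gwU k (x + gwDelta k) = -1 := by
  unfold gwU
  rw [gwSign_add_delta, gwC_add_delta]
  simp only [lt_irrefl, if_false, if_neg (gwCond_irrefl k), one_mul]
  linear_combination (Complex.I^2 * gwC k x^2) * gwSign_sq k x + Complex.I^2 * gwC_sq k x +
    Complex.I_sq

lemma gwU_anticomm {k l : ℕ} (h : k ≠ l) (x : GWX) :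
    gwU k x * gwU l (x + gwDelta k) = -(gwU l x * gwU k (x + gwDelta l)) := by
  unfold gwU
  rw [gwSign_add_delta, gwSign_add_delta, gwC_add_delta, gwC_add_delta]
  simp only [gwCond_symm l k]
  rcases h.lt_or_gt with h' | h' <;> by_cases hC : gwCond k l <;>
    simp only [h', Nat.lt_asymm h', hC, if_true, if_false, if_pos, if_neg, not_false_iff] <;>
    ring

lemma gwW_sq (k : ℕ) (x : GWX) : gwW k x * gwW k (x + gwDelta k) = -1 := by
  unfold gwW
  rw [gw_t_shift, if_pos rfl]
  linear_combination (-((-1:ℂ)^((x k).val))^2 * Complex.I^2) * gwU_sq k x +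
    Complex.I^2 * gw_t_sq ((x k).val) + Complex.I_sq

lemma gwW_anticomm {k l : ℕ} (h : k ≠ l) (x : GWX) :
    gwW k x * gwW l (x + gwDelta k) = -(gwW l x * gwW k (x + gwDelta l)) := by
  unfold gwW
  rw [gw_t_shift, gw_t_shift, if_neg (Ne.symm h), if_neg h]
  linear_combination ((-1:ℂ)^((x k).val) * (-1:ℂ)^((x l).val) * Complex.I^2) * gwU_anticomm h x

lemma gwUW_anticomm (k l : ℕ) (x : GWX) :
    gwU k x * gwW l (x + gwDelta k) = -(gwW l x * gwU k (x + gwDelta l)) := by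
  unfold gwW
  rw [gw_t_shift]
  by_cases h : k = l
  · subst h; rw [if_pos rfl]; ring
  · rw [if_neg (Ne.symm h)]
    linear_combination ((-1:ℂ)^((x l).val) * Complex.I) * gwU_anticomm h x

section Ops
variable (μX : Measure GWX)

lemma gw_measurable_add (e : GWX) : Measurable (fun x : GWX => x + e) :=
  measurable_pi_lambda _ fun i =>
    (Measurable.of_discrete (f := fun a : ZMod 2 => a + e i)).comp (measurable_pi_apply i)

variable (hHaar : ∀ y : GWX, μX.map (· + y) = μX)
include hHaar

lemma gw_mp (e : GWX) : MeasurePreserving (fun x : GWX => x + e) μX μX :=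
  ⟨gw_measurable_add e, hHaar e⟩

lemma gw_comp_ae {f g : GWX → ℂ} (e : GWX) (h : f =ᵐ[μX] g) :
    (fun x => f (x + e)) =ᵐ[μX] (fun x => g (x + e)) :=
  (gw_mp μX hHaar e).quasiMeasurePreserving.ae_eq_comp h

omit hHaar in
lemma gw_add_add (x e : GWX) : x + e + e = x := by
  rw [add_assoc]
  convert add_zero x using 2
  funext i
  exact CharTwo.add_self_eq_zero (e i)

/-- kernel-operator property -/
def GWKer (u : GWX → ℂ) (e : GWX) (A : Lp ℂ 2 μX → Lp ℂ 2 μX) : Prop :=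
  ∀ f : Lp ℂ 2 μX, (↑(A f) : GWX → ℂ) =ᵐ[μX] fun x => u x * (↑f : GWX → ℂ) (x + e)

variable {μX}

lemma GWKer.norm_eq {u e A} (hA : GWKer μX u e A) (hu : ∀ x, ‖u x‖ = 1) (f : Lp ℂ 2 μX) :
    ‖A f‖ = ‖f‖ := by
  rw [Lp.norm_def, Lp.norm_def, eLpNorm_congr_ae (hA f)]
  congr 1
  have h1 : eLpNorm (fun x => u x * (↑f : GWX → ℂ) (x + e)) 2 μX
      = eLpNorm ((↑f : GWX → ℂ) ∘ (fun x => x + e)) 2 μX := by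
    refine eLpNorm_congr_norm_ae (Eventually.of_forall fun x => ?_)
    simp [norm_mul, hu x, Function.comp]
  rw [h1, eLpNorm_comp_measurePreserving (Lp.aestronglyMeasurable f) (gw_mp μX hHaar e)]

lemma GWKer.map_add {u e A} (hA : GWKer μX u e A) (f g : Lp ℂ 2 μX) :
    A (f + g) = A f + A g := by
  apply Lp.ext
  filter_upwards [hA (f + g), Lp.coeFn_add (A f) (A g), hA f, hA g,
    gw_comp_ae μX hHaar e (Lp.coeFn_add f g)] with x h1 h2 h3 h4 h5
  rw [h1, h2, Pi.add_apply, h3, h4, h5, Pi.add_apply]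
  ring

lemma GWKer.map_smul {u e A} (hA : GWKer μX u e A) (a : ℂ) (f : Lp ℂ 2 μX) :
    A (a • f) = a • A f := by
  apply Lp.ext
  filter_upwards [hA (a • f), Lp.coeFn_smul a (A f), hA f,
    gw_comp_ae μX hHaar e (Lp.coeFn_smul a f)] with x h1 h2 h3 h5
  rw [h1, h2, Pi.smul_apply, h3, h5, Pi.smul_apply, smul_eq_mul, smul_eq_mul]
  ring

lemma GWKer.comp_ae {u e A v e' B} (hA : GWKer μX u e A) (hB : GWKer μX v e' B)
    (f : Lp ℂ 2 μX) :
    (↑(A (B f)) : GWX → ℂ) =ᵐ[μX] fun x => u x * v (x + e) * (↑f : GWX → ℂ) (x + e + e') := by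
  filter_upwards [hA (B f), gw_comp_ae μX hHaar e (hB f)] with x h1 h2
  rw [h1, h2]
  ring

lemma GWKer.sq_eq {u e A} (hA : GWKer μX u e A)
    (hsq : ∀ x, u x * u (x + e) = -1) (f : Lp ℂ 2 μX) : A (A f) = -f := by
  apply Lp.ext
  filter_upwards [hA.comp_ae hHaar hA f, Lp.coeFn_neg f] with x h1 h2
  rw [h1, h2, Pi.neg_apply, gw_add_add]
  linear_combination ((↑f : GWX → ℂ) x) * hsq x

lemma GWKer.anticomm {u e A v e' B} (hA : GWKer μX u e A) (hB : GWKer μX v e' B)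
    (hid : ∀ x, u x * v (x + e) = -(v x * u (x + e'))) (f : Lp ℂ 2 μX) :
    A (B f) = -(B (A f)) := by
  apply Lp.ext
  filter_upwards [hA.comp_ae hHaar hB f, Lp.coeFn_neg (B (A f)),
    hB.comp_ae hHaar hA f] with x h1 h2 h3
  rw [h1, h2, Pi.neg_apply, h3]
  have he : x + e + e' = x + e' + e := by rw [add_assoc, add_assoc, add_comm e e']
  rw [he]
  linear_combination ((↑f : GWX → ℂ) (x + e' + e)) * hid x

omit hHaar in
lemma gw_surj {A : Lp ℂ 2 μX → Lp ℂ 2 μX} (hsq : ∀ f, A (A f) = -f) :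
    Function.Surjective A := fun g =>
  ⟨A (A (A g)), by rw [hsq (A (A g)), hsq g, neg_neg]⟩

end Ops

/-- with the `c_k` of Theorem 3.11 and `μ_X` the Haar probability measure on
`X` (characterized as a translation-invariant probability measure), the operators
`(J_k f)(x) = (-1)^{x_1+⋯+x_{k-1}+1} i c_k(x) f(x+δ_k)`,
`(J'_k f)(x) = (-1)^{x_k} i (J_k f)(x)` on `L²(X, μ_X; ℂ)` are surjective `ℂ`-linear
isometries with `J_k² = -id = J'_k²`, pairwise anticommuting:
`J_k J_l = -J_l J_k` and `J'_k J'_l = -J'_l J'_k` for `k ≠ l`, and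
`J_k J'_l = -J'_l J_k` for all `k, l`. -/
theorem gwC_operators_clifford
    (μX : Measure GWX) [IsProbabilityMeasure μX]
    (hHaar : ∀ y : GWX, μX.map (· + y) = μX)
    (J J' : ℕ → Lp ℂ 2 μX → Lp ℂ 2 μX)
    (hJ : ∀ k f, (↑(J k f) : GWX → ℂ) =ᵐ[μX] fun x =>
      gwSign k x * Complex.I * gwC k x * (↑f : GWX → ℂ) (x + gwDelta k))
    (hJ' : ∀ k f, (↑(J' k f) : GWX → ℂ) =ᵐ[μX] fun x =>
      (-1 : ℂ) ^ (x k).val * Complex.I * (↑(J k f) : GWX → ℂ) x) :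
    (∀ k, Function.Surjective (J k) ∧ Function.Surjective (J' k)) ∧
    (∀ k f g, J k (f + g) = J k f + J k g ∧ J' k (f + g) = J' k f + J' k g) ∧
    (∀ k (a : ℂ) f, J k (a • f) = a • J k f ∧ J' k (a • f) = a • J' k f) ∧
    (∀ k f, ‖J k f‖ = ‖f‖ ∧ ‖J' k f‖ = ‖f‖) ∧
    (∀ k f, J k (J k f) = -f ∧ J' k (J' k f) = -f) ∧
    (∀ k l, k ≠ l → ∀ f, J k (J l f) = -(J l (J k f)) ∧ J' k (J' l f) = -(J' l (J' k f))) ∧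
    (∀ k l f, J k (J' l f) = -(J' l (J k f))) := by
  classical
  have hKJ : ∀ k, GWKer μX (gwU k) (gwDelta k) (J k) := by
    intro k f
    refine (hJ k f).trans ?_
    filter_upwards with x
    rw [gwU]
  have hKJ' : ∀ k, GWKer μX (gwW k) (gwDelta k) (J' k) := by
    intro k f
    refine (hJ' k f).trans ?_
    filter_upwards [hJ k f] with x hx
    rw [hx]
    simp only [gwW, gwU]
    ring
  have hsqJ : ∀ k f, J k (J k f) = -f := fun k f => (hKJ k).sq_eq hHaar (gwU_sq k) f
  have hsqJ' : ∀ k f, J' k (J' k f) = -f := fun k f => (hKJ' k).sq_eq hHaar (gwW_sq k) f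
  refine ⟨fun k => ⟨gw_surj (hsqJ k), gw_surj (hsqJ' k)⟩,
    fun k f g => ⟨(hKJ k).map_add hHaar f g, (hKJ' k).map_add hHaar f g⟩,
    fun k a f => ⟨(hKJ k).map_smul hHaar a f, (hKJ' k).map_smul hHaar a f⟩,
    fun k f => ⟨(hKJ k).norm_eq hHaar (gwU_norm k) f, (hKJ' k).norm_eq hHaar (gwW_norm k) f⟩,
    fun k f => ⟨hsqJ k f, hsqJ' k f⟩,
    fun k l h f => ⟨(hKJ k).anticomm hHaar (hKJ l) (gwU_anticomm h) f,
      (hKJ' k).anticomm hHaar (hKJ' l) (gwW_anticomm h) f⟩,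
    fun k l f => (hKJ k).anticomm hHaar (hKJ' l) (gwUW_anticomm k l) f⟩
end
end
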